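/- arXiv:1702.07199 — 4 statements merged into one kernel-verified Lean document; each statement's English description precedes it below -/
import Mathlib

section
/- Let α : ℕ → ℝ with α_n ≠ 0, β_n = α_{n+1}/α_n, and suppose a doubly indexed family s^{(k)}_n satisfies s^{(k)}_n = (β_{n+1} s^{(k-1)}_n + φ^{(k)}_n s^{(k-1)}_{n+1})/(β_{n+1} + φ^{(k)}_n) with β_{n+1} + φ^{(k)}_n ≠ 0. Define D^{(k)}_n = (-1)^{n+k+1}(s^{(k)}_{n+1} - s^{(k)}_n)/α_{n+1} and B^{(k)}_n = β_{n+1}/(β_{n+1} + φ^{(k)}_n). Then for all n ≥ 0 and k ≥ 1: D^{(k)}_n = β_{n+1}(1 - B^{(k)}_{n+1}) D^{(k-1)}_{n+1} - B^{(k)}_n D^{(k-1)}_n. -/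
private lemma aux_alg (a b1 b2 p q x y z m : ℝ)
    (ha : a ≠ 0) (hb1 : b1 ≠ 0) (hb2 : b2 ≠ 0)
    (h1 : b1 + p ≠ 0) (h2 : b2 + q ≠ 0) :
    -m * ((b2 * y + q * z) / (b2 + q) - (b1 * x + p * y) / (b1 + p)) / a =
      b1 * (1 - b2 / (b2 + q)) * (-m * (z - y) / (b1 * a)) -
        b1 / (b1 + p) * (m * (y - x) / a) := by
  field_simp
  ring

theorem D_recurrence
    (α : ℕ → ℝ) (hα : ∀ n, α n ≠ 0)
    (β : ℕ → ℝ) (hβ : ∀ n, β n = α (n + 1) / α n)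
    (φ : ℕ → ℕ → ℝ) (hφ : ∀ k n, β (n + 1) + φ k n ≠ 0)
    (s : ℕ → ℕ → ℝ)
    (hrec : ∀ k n, 1 ≤ k →
      s k n = (β (n + 1) * s (k - 1) n + φ k n * s (k - 1) (n + 1)) / (β (n + 1) + φ k n))
    (D : ℕ → ℕ → ℝ)
    (hD : ∀ k n, D k n = (-1 : ℝ) ^ (n + k + 1) * (s k (n + 1) - s k n) / α (n + 1))
    (B : ℕ → ℕ → ℝ)
    (hB : ∀ k n, B k n = β (n + 1) / (β (n + 1) + φ k n)) :
    ∀ k n : ℕ, 1 ≤ k →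
      D k n = β (n + 1) * (1 - B k (n + 1)) * D (k - 1) (n + 1) - B k n * D (k - 1) n := by
  rintro k n hk
  obtain ⟨k, rfl⟩ := Nat.exists_eq_add_of_le hk
  simp only [Nat.add_sub_cancel_left, Nat.add_comm 1 k] at *
  have h1 := hφ (k + 1) n
  have h2 := hφ (k + 1) (n + 1)
  have hβ1 : β (n + 1) ≠ 0 := by
    rw [hβ]; exact div_ne_zero (hα _) (hα _)
  have hβ2 : β (n + 2) ≠ 0 := by
    rw [hβ]; exact div_ne_zero (hα _) (hα _)
  have ha2 : α (n + 2) = β (n + 1) * α (n + 1) := by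
    rw [hβ, div_mul_cancel₀ _ (hα _)]
  rw [hD, hD, hD, hB, hB,
    hrec (k + 1) n (by omega), hrec (k + 1) (n + 1) (by omega)]
  simp only [Nat.add_sub_cancel]
  have e1 : ((-1 : ℝ)) ^ (n + (k + 1) + 1) = -(-1 : ℝ) ^ (n + k + 1) := by ring
  have e2 : ((-1 : ℝ)) ^ (n + 1 + k + 1) = -(-1 : ℝ) ^ (n + k + 1) := by ring
  rw [e1, e2, show n + 1 + 1 = n + 2 from rfl, ha2]
  exact aux_alg (α (n + 1)) (β (n + 1)) (β (n + 2)) (φ (k + 1) n) (φ (k + 1) (n + 1))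
    (s k n) (s k (n + 1)) (s k (n + 2)) ((-1 : ℝ) ^ (n + k + 1))
    (hα _) hβ1 hβ2 h1 h2
end

section
/- Define α_n = n+1, s^{(0)}_n = Σ_{k=0}^n (-1)^k (k+1), and recursively s^{(k)}_n = ((n+1)α_{n+2} s^{(k-1)}_n + (n+2k-1)α_{n+1} s^{(k-1)}_{n+1})/((n+1)α_{n+2} + (n+2k-1)α_{n+1}). Then s^{(2)}_n = (1/4)(1 - 3(-1)^{n+1}/((2n+3)(2n+5)(2n+7))) for all n ≥ 0. -/
theorem methodS_level2_divergent_series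
    (α : ℕ → ℝ) (hα : ∀ n, α n = (n : ℝ) + 1)
    (S : ℕ → ℕ → ℝ)
    (h0 : ∀ n, S 0 n = ∑ k ∈ Finset.range (n + 1), (-1 : ℝ) ^ k * ((k : ℝ) + 1))
    (hrec : ∀ k n, 1 ≤ k →
      S k n = (((n : ℝ) + 1) * α (n + 2) * S (k - 1) n
              + ((n : ℝ) + 2 * (k : ℝ) - 1) * α (n + 1) * S (k - 1) (n + 1))
            / (((n : ℝ) + 1) * α (n + 2) + ((n : ℝ) + 2 * (k : ℝ) - 1) * α (n + 1))) :
    ∀ n : ℕ, S 2 n = (1 / 4) * (1 - 3 * (-1 : ℝ) ^ (n + 1)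
      / ((2 * (n : ℝ) + 3) * (2 * (n : ℝ) + 5) * (2 * (n : ℝ) + 7))) := by
  have hS0 : ∀ n : ℕ, S 0 n = (1 + (-1 : ℝ) ^ n * (2 * (n : ℝ) + 3)) / 4 := by
    intro n
    rw [h0]
    induction n with
    | zero => norm_num
    | succ m ih =>
      rw [Finset.sum_range_succ, ih]
      push_cast
      rw [pow_succ]
      ring
  have hS1 : ∀ n : ℕ, S 1 n = (1 / 4) * (1 - (-1 : ℝ) ^ n / (2 * (n : ℝ) + 5)) := by
    intro n
    have hD : ((n:ℝ) + 1) * (((n:ℝ) + 2) + 1) + ((n:ℝ) + 2 * (1:ℝ) - 1) * (((n:ℝ) + 1) + 1) ≠ 0 := by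
      nlinarith [Nat.cast_nonneg (α := ℝ) n]
    have h1 : (2 * (n : ℝ) + 5) ≠ 0 := by positivity
    rw [hrec 1 n le_rfl]
    simp only [hα, hS0, Nat.cast_one, Nat.cast_add, Nat.cast_ofNat]
    rw [div_eq_iff hD]
    rw [pow_succ]
    field_simp
    ring
  intro n
  have hD : ((n:ℝ) + 1) * (((n:ℝ) + 2) + 1) + ((n:ℝ) + 2 * (2:ℝ) - 1) * (((n:ℝ) + 1) + 1) ≠ 0 := by
    nlinarith [Nat.cast_nonneg (α := ℝ) n]
  have h1 : (2 * (n : ℝ) + 5) ≠ 0 := by positivity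
  have h3 : (2 * (n : ℝ) + 7) ≠ 0 := by positivity
  have h4 : (2 * (n : ℝ) + 3) ≠ 0 := by positivity
  rw [hrec 2 n (by norm_num)]
  simp only [hα, hS1, Nat.cast_one, Nat.cast_add, Nat.cast_ofNat]
  rw [div_eq_iff hD]
  rw [pow_succ]
  field_simp
  ring
end

section
/- Define α_n = n+1, s^{(0)}_n = Σ_{k=0}^n (-1)^k (k+1), and the method-S recursion s^{(k)}_n = ((n+1)α_{n+2} s^{(k-1)}_n + (n+2k-1)α_{n+1} s^{(k-1)}_{n+1})/((n+1)α_{n+2} + (n+2k-1)α_{n+1}). Then s^{(3)}_n = (1/4)(1 - 3(n-3)(-1)^{n+1}/((2n+3)(2n+5)(2n+7)(2n+9)(2n²+11n+13))) for all n ≥ 0. -/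
set_option maxHeartbeats 1000000


theorem methodS_level3_divergent_series
    (α : ℕ → ℝ) (hα : ∀ n, α n = (n : ℝ) + 1)
    (S : ℕ → ℕ → ℝ)
    (h0 : ∀ n, S 0 n = ∑ k ∈ Finset.range (n + 1), (-1 : ℝ) ^ k * ((k : ℝ) + 1))
    (hrec : ∀ k n, 1 ≤ k →
      S k n = (((n : ℝ) + 1) * α (n + 2) * S (k - 1) n
              + ((n : ℝ) + 2 * (k : ℝ) - 1) * α (n + 1) * S (k - 1) (n + 1))
            / (((n : ℝ) + 1) * α (n + 2) + ((n : ℝ) + 2 * (k : ℝ) - 1) * α (n + 1))) :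
    ∀ n : ℕ, S 3 n = (1 / 4) * (1 - 3 * ((n : ℝ) - 3) * (-1 : ℝ) ^ (n + 1)
      / ((2 * (n : ℝ) + 3) * (2 * (n : ℝ) + 5) * (2 * (n : ℝ) + 7) * (2 * (n : ℝ) + 9)
         * (2 * (n : ℝ) ^ 2 + 11 * (n : ℝ) + 13))) := by
  have hS0 : ∀ n : ℕ, S 0 n = (1 + (2 * (n : ℝ) + 3) * (-1) ^ n) / 4 := by
    intro n
    induction n with
    | zero => norm_num [h0]
    | succ m ih =>
      rw [h0, Finset.sum_range_succ, ← h0, ih]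
      push_cast [pow_succ]
      ring
  have hS1 : ∀ n : ℕ, S 1 n = (1 - (-1) ^ n / (2 * (n : ℝ) + 5)) / 4 := by
    intro n
    have key := hrec 1 n le_rfl
    norm_num [hα] at key
    rw [key, hS0 n, hS0 (n + 1)]
    have hd : ((n : ℝ) + 1) * ((n : ℝ) + 2 + 1) + ((n : ℝ) + 2 - 1) * ((n : ℝ) + 1 + 1) ≠ 0 := by
      nlinarith [Nat.cast_nonneg (α := ℝ) n]
    have h5 : (2 * (n : ℝ) + 5) ≠ 0 := by positivity
    push_cast [pow_succ]
    field_simp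
    ring
  have hS2 : ∀ n : ℕ, S 2 n =
      (1 + 3 * (-1) ^ n / ((2 * (n : ℝ) + 3) * (2 * (n : ℝ) + 5) * (2 * (n : ℝ) + 7))) / 4 := by
    intro n
    have key := hrec 2 n (by norm_num)
    norm_num [hα] at key
    rw [key, hS1 n, hS1 (n + 1)]
    have hd : ((n : ℝ) + 1) * ((n : ℝ) + 2 + 1) + ((n : ℝ) + 4 - 1) * ((n : ℝ) + 1 + 1) ≠ 0 := by
      nlinarith [Nat.cast_nonneg (α := ℝ) n]
    have h3 : (2 * (n : ℝ) + 3) ≠ 0 := by positivity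
    have h5 : (2 * (n : ℝ) + 5) ≠ 0 := by positivity
    have h7 : (2 * (n : ℝ) + 7) ≠ 0 := by positivity
    push_cast [pow_succ]
    field_simp
    ring
  intro n
  have key := hrec 3 n (by norm_num)
  norm_num [hα] at key
  rw [key, hS2 n, hS2 (n + 1)]
  have h3 : (2 * (n : ℝ) + 3) ≠ 0 := by positivity
  have h5 : (2 * (n : ℝ) + 5) ≠ 0 := by positivity
  have h7 : (2 * (n : ℝ) + 7) ≠ 0 := by positivity
  have h9 : (2 * (n : ℝ) + 9) ≠ 0 := by positivity
  have hq : (2 * (n : ℝ) ^ 2 + 11 * (n : ℝ) + 13) ≠ 0 := by positivity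
  have hd : ((n : ℝ) + 1) * ((n : ℝ) + 2 + 1) + ((n : ℝ) + 6 - 1) * ((n : ℝ) + 1 + 1) ≠ 0 := by
    nlinarith [Nat.cast_nonneg (α := ℝ) n]
  push_cast [pow_succ]
  field_simp
  ring
end

section
/- Let α : ℕ → ℝ be nonzero with β_n = α_{n+1}/α_n, s_n = Σ_{k=0}^n (-1)^k α_k, and s^{(1)}_n = (β_{n+1} s_n + s_{n+1})/(β_{n+1} + 1) (the level-1 transform with φ^{(1)}_n = 1). Then, assuming 1 + β_{n+1} ≠ 0 and 1 + β_{n+2} ≠ 0, (s^{(1)}_{n+1} - s^{(1)}_n)/α_{n+1} = (-1)^n β_{n+1} (1/(1+β_{n+2}) - 1/(1+β_{n+1})). -/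
theorem delta_s1_formula
    (α : ℕ → ℝ) (hα : ∀ n, α n ≠ 0)
    (β : ℕ → ℝ) (hβ : ∀ n, β n = α (n + 1) / α n)
    (s : ℕ → ℝ) (hs : ∀ n, s n = ∑ k ∈ Finset.range (n + 1), (-1 : ℝ) ^ k * α k)
    (s1 : ℕ → ℝ) (hs1 : ∀ n, s1 n = (β (n + 1) * s n + s (n + 1)) / (β (n + 1) + 1)) :
    ∀ n : ℕ, 1 + β (n + 1) ≠ 0 → 1 + β (n + 2) ≠ 0 →
      (s1 (n + 1) - s1 n) / α (n + 1)
        = (-1 : ℝ) ^ n * β (n + 1) * (1 / (1 + β (n + 2)) - 1 / (1 + β (n + 1))) := by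
  intro n h1 h2
  have e1 : s (n + 1) = s n + (-1 : ℝ) ^ (n + 1) * α (n + 1) := by
    rw [hs, hs, Finset.sum_range_succ]
  have e2 : s (n + 2) = s (n + 1) + (-1 : ℝ) ^ (n + 2) * α (n + 2) := by
    rw [hs, hs, Finset.sum_range_succ]
  have hb1 : α (n + 2) = β (n + 1) * α (n + 1) := by
    rw [hβ]; exact (div_mul_cancel₀ _ (hα (n + 1))).symm
  have h1' : β (n + 1) + 1 ≠ 0 := fun h => h1 (by linarith)
  have h2' : β (n + 2) + 1 ≠ 0 := fun h => h2 (by linarith)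
  have ha := hα (n + 1)
  rw [hs1, hs1]
  rw [show n + 1 + 1 = n + 2 from rfl] at *
  rw [e2, e1, hb1]
  field_simp
  ring
end
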